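/- arXiv:1307.5163 — 4 statements merged into one kernel-verified Lean document; each statement's English description precedes it below -/
import Mathlib

section
/- Let (X,d) be a complete separable metric space, C a countable dense subset of X, and ℬ the countable family of all sets of the form ⋃_{i=1}^m B(x_i, 1/n) for finite families x_1,…,x_m ∈ C and n∈ℕ, where B(x,r) is the open ball of radius r around x. For Borel probability measures P, Q on X, Q is NOT absolutely continuous with respect to P if and only if there exists N∈ℕ such that for every n∈ℕ there exists B_n ∈ ℬ with P[B_n] ≤ 1/n and Q[B_n] ≥ 1/N. -/
open MeasureTheory Set
open scoped NNReal ENNReal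

/-!
If `Q` charges a `P`-null set `t`, outer regularity of `P` gives open sets `U ⊇ t` of arbitrarily
small `P`-measure, all with `Q U ≥ Q t`. An open set is the increasing union of the sets of points
whose `1/(k+1)`-ball lies in it; the `k`-th of these is covered by the countably many balls of
radius `1/(2k+2)` centred in `C` and contained in `U`, and finitely many of those balls already
carry all but an arbitrarily small part of `Q U`. Conversely, if `P B_k ≤ 2⁻ᵏ` and `Q B_k ≥ 1/N`
for all `k`, then by Borel–Cantelli `limsup B_k` is a `P`-null set of `Q`-measure at least `1/N`.
-/

theorem exists_finset_subset_lt_measure_biUnion {α ι : Type*} [MeasurableSpace α] {μ : Measure α}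
    {t : Set ι} (ht : t.Countable) {f : ι → Set α} {a : ℝ≥0∞} (ha : a < μ (⋃ i ∈ t, f i)) :
    ∃ F : Finset ι, ↑F ⊆ t ∧ a < μ (⋃ i ∈ F, f i) := by
  have hunion : ⋃ i ∈ t, f i = ⋃ F ∈ {F : Finset ι | ↑F ⊆ t}, ⋃ i ∈ F, f i := by
    refine subset_antisymm (iUnion₂_subset fun i hi => ?_) (iUnion₂_subset fun F hF => ?_)
    · exact subset_biUnion_of_mem (u := fun F : Finset ι => ⋃ i ∈ F, f i)
        (show ↑({i} : Finset ι) ⊆ t by simpa using hi) |>.trans' (by simp)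
    · exact biUnion_subset_biUnion_left hF
  have hcount : {F : Finset ι | ↑F ⊆ t}.Countable :=
    ((countable_ofPred_finite_subset ht).preimage Finset.coe_injective).mono
      fun F hF => show _ ∧ _ from ⟨F.finite_toSet, hF⟩
  have hdir : DirectedOn (Function.onFun (· ⊆ ·) fun F : Finset ι => ⋃ i ∈ F, f i)
      {F : Finset ι | ↑F ⊆ t} := by
    classical
    intro F hF G hG
    refine ⟨F ∪ G, by simpa using And.intro hF hG, ?_, ?_⟩ <;>
      exact biUnion_subset_biUnion_left (by simp)
  rw [hunion, measure_biUnion_eq_iSup hcount hdir] at ha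
  simpa only [lt_iSup_iff, exists_prop, mem_ofPred_eq] using ha

section PseudoMetric

variable {X : Type*} [PseudoMetricSpace X]

theorem iUnion_setOf_ball_one_div_subset {U : Set X} (hU : IsOpen U) :
    ⋃ k : ℕ, {x | Metric.ball x (1 / (k + 1)) ⊆ U} = U := by
  refine subset_antisymm (iUnion_subset fun k x hx => hx (Metric.mem_ball_self (by positivity)))
    fun x hx => ?_
  obtain ⟨ε, hε, hball⟩ := Metric.isOpen_iff.1 hU x hx
  obtain ⟨k, hk⟩ := exists_nat_one_div_lt hε
  exact mem_iUnion.2 ⟨k, (Metric.ball_subset_ball hk.le).trans hball⟩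

theorem monotone_setOf_ball_one_div_subset (U : Set X) :
    Monotone fun k : ℕ => {x | Metric.ball x (1 / (k + 1)) ⊆ U} :=
  fun _ _ hkl _ hx => (Metric.ball_subset_ball (Nat.one_div_le_one_div hkl)).trans hx

theorem setOf_ball_subset_subset_biUnion_ball {C : Set X} (hC : Dense C) {U : Set X} {r : ℝ}
    (hr : 0 < r) :
    {x | Metric.ball x (2 * r) ⊆ U} ⊆ ⋃ c ∈ {c ∈ C | Metric.ball c r ⊆ U}, Metric.ball c r := by
  intro x hx
  obtain ⟨c, hcC, hxc⟩ := hC.exists_dist_lt x hr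
  refine mem_biUnion ⟨hcC, fun y hy => hx ?_⟩ (Metric.mem_ball.2 hxc)
  rw [Metric.mem_ball] at hy ⊢
  linarith [dist_triangle y c x, dist_comm x c]

theorem exists_finset_biUnion_ball_subset_lt_measure [MeasurableSpace X] {C : Set X}
    (hCcount : C.Countable) (hCdense : Dense C) {U : Set X} (hU : IsOpen U) (μ : Measure X)
    {a : ℝ≥0∞} (ha : a < μ U) :
    ∃ (s : Finset X) (m : ℕ), (↑s : Set X) ⊆ C ∧ 0 < m ∧
      ⋃ x ∈ s, Metric.ball x (1 / (m : ℝ)) ⊆ U ∧ a < μ (⋃ x ∈ s, Metric.ball x (1 / (m : ℝ))) := by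
  rw [← iUnion_setOf_ball_one_div_subset hU, (monotone_setOf_ball_one_div_subset U).measure_iUnion,
    lt_iSup_iff] at ha
  obtain ⟨k, hk⟩ := ha
  set r : ℝ := 1 / (2 * (k + 1) : ℕ)
  have hr : 0 < r := by positivity
  have hcover : {x | Metric.ball x (1 / (k + 1)) ⊆ U} ⊆
      ⋃ c ∈ {c ∈ C | Metric.ball c r ⊆ U}, Metric.ball c r := by
    convert setOf_ball_subset_subset_biUnion_ball hCdense hr using 4
    simp only [r]; push_cast; field_simp
  obtain ⟨s, hsS, hs⟩ := exists_finset_subset_lt_measure_biUnion (hCcount.mono fun c hc => hc.1)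
    (hk.trans_le (measure_mono hcover))
  exact ⟨s, 2 * (k + 1), fun c hc => (hsS hc).1, by positivity,
    iUnion₂_subset fun c hc => (hsS hc).2, hs⟩

end PseudoMetric

theorem not_absolutelyContinuous_of_tsum_ne_top_of_le_measure {α : Type*} [MeasurableSpace α]
    {P Q : Measure α} [IsFiniteMeasure Q] {B : ℕ → Set α} (hB : ∀ k, MeasurableSet (B k))
    (hP : ∑' k, P (B k) ≠ ∞) {ε : ℝ≥0∞} (hε : ε ≠ 0) (hQ : ∀ k, ε ≤ Q (B k)) : ¬ Q ≪ P := by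
  intro hQP
  have hP0 : P (Filter.limsup B Filter.atTop) = 0 := measure_limsup_atTop_eq_zero hP
  have hQε : ε ≤ Q (Filter.limsup B Filter.atTop) := by
    have hanti : Antitone fun i => ⋃ k ≥ i, B k := fun i j hij =>
      biUnion_subset_biUnion_left fun k hk => hij.trans hk
    rw [Filter.limsup_eq_iInf_iSup_of_nat]
    simp only [iInf_eq_iInter, iSup_eq_iUnion]
    rw [hanti.measure_iInter (fun i => (MeasurableSet.biUnion (to_countable _)
      fun k _ => hB k).nullMeasurableSet) ⟨0, measure_ne_top Q _⟩]
    exact le_iInf fun i => (hQ i).trans <|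
      measure_mono (subset_iUnion₂ (s := fun k (_ : k ≥ i) => B k) i le_rfl)
  exact hε (le_zero_iff.1 (hQε.trans_eq (hQP hP0)))

theorem statement8_general {X : Type*} [MetricSpace X]
    [MeasurableSpace X] [BorelSpace X]
    (C : Set X) (hCcount : C.Countable) (hCdense : Dense C)
    (P Q : Measure X) [IsProbabilityMeasure P] [IsProbabilityMeasure Q] :
    ¬ Q ≪ P ↔
      ∃ N : ℕ, 0 < N ∧ ∀ n : ℕ, 0 < n →
        ∃ (s : Finset X) (m : ℕ), (↑s : Set X) ⊆ C ∧ 0 < m ∧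
          P (⋃ x ∈ s, Metric.ball x (1 / (m : ℝ))) ≤ 1 / (n : ℝ≥0∞) ∧
          1 / (N : ℝ≥0∞) ≤ Q (⋃ x ∈ s, Metric.ball x (1 / (m : ℝ))) := by
  constructor
  · intro hQP
    obtain ⟨t, hPt, hQt⟩ : ∃ t, P t = 0 ∧ Q t ≠ 0 := by
      simpa [Measure.AbsolutelyContinuous] using hQP
    obtain ⟨N, hN⟩ := ENNReal.exists_inv_nat_lt hQt
    have hNpos : 0 < N := Nat.pos_of_ne_zero (by rintro rfl; simp at hN)
    refine ⟨N, hNpos, fun n hn => ?_⟩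
    obtain ⟨U, htU, hU, hPU⟩ := exists_isOpen_lt_of_lt (μ := P) t (1 / (n : ℝ≥0∞)) (by simp [hPt])
    obtain ⟨s, m, hsC, hm, hsU, hQs⟩ := exists_finset_biUnion_ball_subset_lt_measure hCcount
      hCdense hU Q ((one_div (N : ℝ≥0∞) ▸ hN).trans_le (measure_mono htU))
    exact ⟨s, m, hsC, hm, (measure_mono hsU).trans hPU.le, hQs.le⟩
  · rintro ⟨N, -, h⟩
    choose s m _ _ hPs hQs using fun k : ℕ => h (2 ^ k) (by positivity)
    have hsum : ∑' k, P (⋃ x ∈ s k, Metric.ball x (1 / (m k : ℝ))) ≠ ∞ :=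
      ne_top_of_le_ne_top (ENNReal.tsum_geometric_two ▸ ENNReal.ofNat_ne_top)
        (ENNReal.tsum_le_tsum fun k => (hPs k).trans_eq (by simp [ENNReal.inv_pow]))
    exact not_absolutelyContinuous_of_tsum_ne_top_of_le_measure
      (fun k => (isOpen_biUnion fun _ _ => Metric.isOpen_ball).measurableSet) hsum (by simp) hQs

/-- **A countable Borel test for non-absolute-continuity.** Let `(X,d)` be a complete
separable metric space, `C` a countable dense subset, and consider the countable family
of all finite unions `⋃_{i=1}^k B(x_i, 1/m)` of open balls with centers in `C` and
rational radii `1/m`. For Borel probability measures `P, Q` on `X`, `Q` is *not*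
absolutely continuous with respect to `P` if and only if there exists `N ∈ ℕ` such that
for every `n ∈ ℕ` there is a set `B_n` in the family with `P[B_n] ≤ 1/n` and
`Q[B_n] ≥ 1/N`. -/
theorem statement8 {X : Type*} [MetricSpace X] [CompleteSpace X]
    [TopologicalSpace.SeparableSpace X] [MeasurableSpace X] [BorelSpace X]
    (C : Set X) (hCcount : C.Countable) (hCdense : Dense C)
    (P Q : Measure X) [IsProbabilityMeasure P] [IsProbabilityMeasure Q] :
    ¬ Q ≪ P ↔
      ∃ N : ℕ, 0 < N ∧ ∀ n : ℕ, 0 < n →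
        ∃ (s : Finset X) (m : ℕ), (↑s : Set X) ⊆ C ∧ 0 < m ∧
          P (⋃ x ∈ s, Metric.ball x (1 / (m : ℝ))) ≤ 1 / (n : ℝ≥0∞) ∧
          1 / (N : ℝ≥0∞) ≤ Q (⋃ x ∈ s, Metric.ball x (1 / (m : ℝ))) :=
  statement8_general C hCcount hCdense P Q
end

section
/- Let X be a Polish space and let 𝔓(X) denote the space of Borel probability measures on X equipped with the topology of weak convergence. Then the graph Γ_∼ = {(P,Q) ∈ 𝔓(X)×𝔓(X) : P ∼ Q} of the measure-equivalence relation is a Borel subset of 𝔓(X)×𝔓(X). -/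
/-! For finite measures, `P ≪ Q` is equivalent to the ε-δ condition `Q A < δ → P A ≤ ε`. By outer
regularity of `Q` and inner approximation of open sets, it suffices to test this condition with
`ε, δ` of the form `1 / n` on the countably many finite unions `W` of a countable basis. This writes
`{(P, Q) | P ≪ Q}` as a countable Boolean combination of the sets `{Q W < 1 / m}` and
`{P W ≤ 1 / n}`, which are Borel because `P ↦ P W` is lower semicontinuous for the weak topology
when `W` is open (portmanteau theorem). -/

open MeasureTheory Set Filter TopologicalSpace
open scoped ENNReal

theorem TopologicalSpace.IsTopologicalBasis.measure_le_iSup_finset_biUnion {X : Type*}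
    [TopologicalSpace X] [MeasurableSpace X] {B : Set (Set X)} (hB : IsTopologicalBasis B)
    [Countable B] (μ : Measure X) {U : Set X} (hU : IsOpen U) :
    μ U ≤ ⨆ (t : Finset B) (_ : ⋃ b ∈ t, (b : Set X) ⊆ U), μ (⋃ b ∈ t, (b : Set X)) := by
  classical
  set s : Finset B → Set X := fun t => ⋃ b ∈ t.filter (fun b : B => (b : Set X) ⊆ U), (b : Set X)
  have hs_mono : Monotone s := fun t t' htt' =>
    biUnion_subset_biUnion_left (Finset.coe_subset.2 (Finset.filter_subset_filter _ htt'))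
  have hs_sub : ∀ t, s t ⊆ U := fun t => iUnion₂_subset fun b hb => (Finset.mem_filter.1 hb).2
  have hU_eq : U = ⋃ t, s t := by
    refine subset_antisymm ?_ (iUnion_subset hs_sub)
    intro x hx
    obtain ⟨b, hbB, hxb, hbU⟩ := hB.exists_subset_of_mem_open hx hU
    exact mem_iUnion.2 ⟨{⟨b, hbB⟩}, mem_iUnion₂.2 ⟨⟨b, hbB⟩, by simpa using hbU, hxb⟩⟩
  calc μ U = ⨆ t, μ (s t) := by rw [hU_eq, hs_mono.measure_iUnion]
    _ ≤ _ := iSup_mono' fun t => ⟨t.filter (fun b : B => (b : Set X) ⊆ U),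
      le_iSup (fun _ : s t ⊆ U => μ (s t)) (hs_sub t)⟩

namespace MeasureTheory

theorem Measure.AbsolutelyContinuous.exists_pos_forall_measure_lt {α : Type*} [MeasurableSpace α]
    {μ ν : Measure α} [IsFiniteMeasure μ] [SigmaFinite ν] (h : μ ≪ ν) {ε : ℝ≥0∞} (hε : ε ≠ 0) :
    ∃ δ > 0, ∀ s, ν s < δ → μ s < ε := by
  obtain ⟨δ, hδ, hδε⟩ := exists_pos_setLIntegral_lt_of_measure_lt
    (Measure.lintegral_rnDeriv_le.trans_lt (measure_lt_top μ univ)).ne hε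
  exact ⟨δ, hδ, fun s hs => Measure.setLIntegral_rnDeriv h s ▸ hδε s hs⟩

theorem Measure.absolutelyContinuous_iff_forall_nat {X ι : Type*} [TopologicalSpace X]
    [MeasurableSpace X] {P Q : Measure X} [IsFiniteMeasure P] [SigmaFinite Q] [Q.OuterRegular]
    {g : ι → Set X} (hg : ∀ U, IsOpen U → P U ≤ ⨆ (i) (_ : g i ⊆ U), P (g i)) :
    P ≪ Q ↔ ∀ n : ℕ, ∃ m : ℕ, ∀ i, Q (g i) < (m : ℝ≥0∞)⁻¹ → P (g i) ≤ (n : ℝ≥0∞)⁻¹ := by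
  refine ⟨fun hPQ n => ?_, fun h => Measure.AbsolutelyContinuous.mk fun s _ hQs => ?_⟩
  · obtain ⟨δ, hδ, hδε⟩ :=
      hPQ.exists_pos_forall_measure_lt (ENNReal.inv_ne_zero.2 (ENNReal.natCast_ne_top n))
    obtain ⟨m, hm⟩ := ENNReal.exists_inv_nat_lt hδ.ne'
    exact ⟨m, fun i hi => (hδε _ (hi.trans hm)).le⟩
  · by_contra hPs
    obtain ⟨n, hn⟩ := ENNReal.exists_inv_nat_lt hPs
    obtain ⟨m, hm⟩ := h n
    obtain ⟨U, hsU, hU, hQU⟩ := s.exists_isOpen_lt_of_lt (μ := Q) _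
      (hQs.trans_lt (ENNReal.inv_pos.2 (ENNReal.natCast_ne_top m)))
    have hPU : P U ≤ (n : ℝ≥0∞)⁻¹ :=
      (hg U hU).trans (iSup₂_le fun i hiU => hm i ((measure_mono hiU).trans_lt hQU))
    exact ((measure_mono hsU).trans hPU).not_gt hn

namespace ProbabilityMeasure

theorem lowerSemicontinuous_apply_of_isOpen {X : Type*} [TopologicalSpace X]
    [MeasurableSpace X] [OpensMeasurableSpace X] [HasOuterApproxClosed X] {U : Set X}
    (hU : IsOpen U) : LowerSemicontinuous fun μ : ProbabilityMeasure X => (μ : Measure X) U :=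
  lowerSemicontinuous_iff_le_liminf.2 fun _ => le_liminf_measure_open_of_tendsto tendsto_id hU

theorem measurableSet_setOf_absolutelyContinuous {X : Type*} [TopologicalSpace X]
    [PseudoMetrizableSpace X] [SecondCountableTopology X] [MeasurableSpace X]
    [BorelSpace X] :
    MeasurableSet[borel (ProbabilityMeasure X × ProbabilityMeasure X)]
      {p : ProbabilityMeasure X × ProbabilityMeasure X | (p.1 : Measure X) ≪ (p.2 : Measure X)} := by
  borelize (ProbabilityMeasure X × ProbabilityMeasure X)
  have : Countable (countableBasis X) := (countable_countableBasis X).to_subtype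
  set g : Finset (countableBasis X) → Set X := fun t => ⋃ b ∈ t, (b : Set X)
  have hg_open (t) : IsOpen (g t) :=
    isOpen_biUnion fun b _ => isOpen_of_mem_countableBasis b.2
  have hset : {p : ProbabilityMeasure X × ProbabilityMeasure X | (p.1 : Measure X) ≪ p.2} =
      ⋂ n : ℕ, ⋃ m : ℕ, ⋂ t, {p | (p.2 : Measure X) (g t) < (m : ℝ≥0∞)⁻¹ →
        (p.1 : Measure X) (g t) ≤ (n : ℝ≥0∞)⁻¹} := by
    ext p
    simp only [mem_ofPred_eq, mem_iInter, mem_iUnion]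
    exact Measure.absolutelyContinuous_iff_forall_nat fun U hU =>
      (isBasis_countableBasis X).measure_le_iSup_finset_biUnion _ hU
  rw [hset]
  refine .iInter fun n => .iUnion fun m => .iInter fun t => .imp ?_ ?_
  · exact ((lowerSemicontinuous_apply_of_isOpen (hg_open t)).comp continuous_snd).measurable
      measurableSet_Iio
  · exact ((lowerSemicontinuous_apply_of_isOpen (hg_open t)).comp continuous_fst).measurable
      measurableSet_Iic

end ProbabilityMeasure

end MeasureTheory

/-- **Borel measurability of the measure-equivalence relation.** Let `X` be a Polish
space and let `𝔓(X)` be the space of Borel probability measures on `X` with the topology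
of weak convergence. The graph `Γ_∼ = {(P,Q) : P ∼ Q}` of the measure-equivalence
relation (mutual absolute continuity) is a Borel subset of `𝔓(X) × 𝔓(X)`, i.e., it is
measurable for the Borel σ-algebra of the product topology. -/
theorem statement9 {X : Type*} [TopologicalSpace X] [PolishSpace X]
    [MeasurableSpace X] [BorelSpace X] :
    MeasurableSet[borel (ProbabilityMeasure X × ProbabilityMeasure X)]
      {p : ProbabilityMeasure X × ProbabilityMeasure X |
        (p.1 : Measure X) ≪ (p.2 : Measure X) ∧ (p.2 : Measure X) ≪ (p.1 : Measure X)} := by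
  borelize (ProbabilityMeasure X × ProbabilityMeasure X)
  have hS := ProbabilityMeasure.measurableSet_setOf_absolutelyContinuous (X := X)
  exact hS.inter (continuous_swap.measurable hS)
end

section
/- Let E and Ω be Polish spaces, 𝔓(Ω) the Polish space of Borel probability measures on Ω with the topology of weak convergence, and let x ↦ P^x be a Borel-measurable map from E to 𝔓(Ω). Then the set Γ = {(x,Q) ∈ E×𝔓(Ω) : Q ∼ P^x} is an analytic subset of E×𝔓(Ω). -/
open MeasureTheory
open scoped NNReal ENNReal

/-- A subset of a measurable (Polish) space is analytic if it is the projection of a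
Borel subset of the product with `ℝ`. -/
def IsAnalyticSet {α : Type*} [MeasurableSpace α] (s : Set α) : Prop :=
  ∃ B : Set (α × ℝ), MeasurableSet B ∧ Prod.fst '' B = s

/-- **Analyticity of the equivalence graph.** Let `E` and `Ω` be Polish spaces, `𝔓(Ω)`
the space of Borel probability measures on `Ω`, and `x ↦ P^x` a Borel map from `E` to
`𝔓(Ω)`. Then the set `Γ = {(x,Q) ∈ E×𝔓(Ω) : Q ∼ P^x}` (mutual absolute continuity) is
an analytic subset of `E × 𝔓(Ω)`. -/
theorem statement10 {E Ω : Type*}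
    [TopologicalSpace E] [PolishSpace E] [MeasurableSpace E] [BorelSpace E]
    [TopologicalSpace Ω] [PolishSpace Ω] [MeasurableSpace Ω] [BorelSpace Ω]
    (P : E → Measure Ω) (hprob : ∀ x, IsProbabilityMeasure (P x))
    (hmeas : Measurable P) :
    IsAnalyticSet {p : E × {μ : Measure Ω // IsProbabilityMeasure μ} |
      (p.2 : Measure Ω) ≪ P p.1 ∧ P p.1 ≪ (p.2 : Measure Ω)} := by
  set S : Set (E × {μ : Measure Ω // IsProbabilityMeasure μ}) :=
    {p | (p.2 : Measure Ω) ≪ P p.1 ∧ P p.1 ≪ (p.2 : Measure Ω)} with hS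
  -- It suffices to show `S` is measurable (then project `S ×ˢ {0}`).
  suffices hSm : MeasurableSet S by
    refine ⟨S ×ˢ {(0 : ℝ)}, hSm.prod (measurableSet_singleton 0), ?_⟩
    ext p
    constructor
    · rintro ⟨q, ⟨hq, -⟩, rfl⟩; exact hq
    · intro hp; exact ⟨(p, 0), ⟨hp, rfl⟩, rfl⟩
  -- Define the two kernels.
  let κ : ProbabilityTheory.Kernel (E × {μ : Measure Ω // IsProbabilityMeasure μ}) Ω :=
    ⟨fun p => (p.2 : Measure Ω), measurable_subtype_coe.comp measurable_snd⟩
  let η : ProbabilityTheory.Kernel (E × {μ : Measure Ω // IsProbabilityMeasure μ}) Ω :=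
    ⟨fun p => P p.1, hmeas.comp measurable_fst⟩
  have hκ : ProbabilityTheory.IsFiniteKernel κ :=
    ⟨⟨1, ENNReal.one_lt_top, fun p => by
      have := p.2.2
      simp [κ, this.measure_univ]⟩⟩
  have hη : ProbabilityTheory.IsFiniteKernel η :=
    ⟨⟨1, ENNReal.one_lt_top, fun p => by
      have := hprob p.1
      simp [η, this.measure_univ]⟩⟩
  have h1 : MeasurableSet {p : E × {μ : Measure Ω // IsProbabilityMeasure μ} | κ p ≪ η p} :=
    ProbabilityTheory.Kernel.measurableSet_absolutelyContinuous κ η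
  have h2 : MeasurableSet {p : E × {μ : Measure Ω // IsProbabilityMeasure μ} | η p ≪ κ p} :=
    ProbabilityTheory.Kernel.measurableSet_absolutelyContinuous η κ
  have : S = {p | κ p ≪ η p} ∩ {p | η p ≪ κ p} := rfl
  rw [this]
  exact h1.inter h2
end

section
/- Let E be a metrizable, noncompact, locally compact Hausdorff topological space with a countable base, and let D_E be the space of E-valued RCLL paths on [0,∞) with the σ-algebra generated by the coordinate maps X_t(ω)=ω(t). There exists a measurable functional L : D_E → E such that (1) L(ω) = lim_{t→∞} X_t(ω) whenever this limit exists in E, and (2) L(θ_t(ω)) = L(ω) for all ω∈D_E and all t≥0, where θ_t(ω)=ω(t+·) is the shift operator. -/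
/-!
Fix a compatible metric on `E` and a dense sequence `u`. The map `x ↦ (edist x (u k))ₖ` is a
continuous injection of `E` into `ℕ → ℝ≥0∞`; as `E` is σ-compact it is a measurable embedding, so
it has a measurable left inverse `r`. Put `L ω := r (limsup_{t → ∞} edist (ω t) (u k))ₖ`. These
limsups do not see a shift of time, are the coordinates of `lim ω` when that limit exists, and, by
right continuity, may be taken along a countable dense set of times, which makes them measurable.
-/

open MeasureTheory Filter Set
open scoped NNReal ENNReal

noncomputable section

/-- A function `f : [0,∞) → E` is RCLL (càdlàg) if it is everywhere right-continuous
and has left limits at every `t > 0`. -/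
def IsCadlag {E : Type*} [TopologicalSpace E] (f : ℝ≥0 → E) : Prop :=
  (∀ t : ℝ≥0, ContinuousWithinAt f (Set.Ici t) t) ∧
    (∀ t : ℝ≥0, 0 < t → ∃ l : E, Filter.Tendsto f (nhdsWithin t (Set.Iio t)) (nhds l))

/-- The space `D_E` of `E`-valued RCLL paths on `[0,∞)`. -/
structure Cadlag (E : Type*) [TopologicalSpace E] where
  toFun : ℝ≥0 → E
  isCadlag : IsCadlag toFun

namespace Cadlag

variable {E : Type*} [TopologicalSpace E]

/-- The σ-algebra on `D_E` generated by the coordinate maps `ω ↦ ω(t)`. -/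
instance instMeasurableSpace [MeasurableSpace E] : MeasurableSpace (Cadlag E) :=
  ⨆ t : ℝ≥0, MeasurableSpace.comap (fun ω => ω.toFun t) inferInstance

/-- The shift operator `θ_t`. -/
def shift (t : ℝ≥0) (ω : Cadlag E) : Cadlag E :=
  ⟨fun s => ω.toFun (t + s), by
    constructor
    · intro s
      exact (ω.isCadlag.1 (t + s)).comp
        ((continuous_const.add continuous_id).continuousWithinAt)
        (fun x hx => Set.mem_Ici.mpr (add_le_add le_rfl (Set.mem_Ici.mp hx)))
    · intro s hs
      obtain ⟨l, hl⟩ := ω.isCadlag.2 (t + s) (lt_of_lt_of_le hs le_add_self)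
      refine ⟨l, hl.comp ?_⟩
      apply tendsto_nhdsWithin_of_tendsto_nhds_of_eventually_within
      · exact ((continuous_const.add continuous_id).continuousAt).mono_left nhdsWithin_le_nhds
      · filter_upwards [self_mem_nhdsWithin] with u hu
        exact Set.mem_Iio.mpr (add_lt_add_of_le_of_lt le_rfl (Set.mem_Iio.mp hu))⟩

end Cadlag

open Topology

theorem Filter.map_const_add_atTop_eq {α : Type*} [AddCommMonoid α] [LinearOrder α]
    [CanonicallyOrderedAdd α] [Sub α] [OrderedSub α] [AddLeftReflectLE α] [IsDirectedOrder α]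
    (t : α) : map (t + ·) atTop = atTop :=
  map_atTop_eq_of_gc (· - t) t (fun _ _ h => add_le_add le_rfl h)
    (fun _ _ hc => (le_tsub_iff_left hc).symm) (fun _ _ => le_add_tsub)

theorem Filter.limsup_comp_const_add {α β : Type*} [AddCommMonoid α] [LinearOrder α]
    [CanonicallyOrderedAdd α] [Sub α] [OrderedSub α] [AddLeftReflectLE α] [IsDirectedOrder α]
    [ConditionallyCompleteLattice β] (u : α → β) (t : α) :
    limsup (fun s => u (t + s)) atTop = limsup u atTop := by
  rw [← Function.comp_def, limsup_comp, map_const_add_atTop_eq]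

section RightContinuous

variable {β : Type*} [CompleteLinearOrder β] [TopologicalSpace β] [OrderTopology β]
  {v : ℝ≥0 → β} {D : Set ℝ≥0}

theorem le_biSup_of_continuousWithinAt_Ici (hD : Dense D) {s : ℝ≥0}
    (hv : ContinuousWithinAt v (Ici s) s) : v s ≤ ⨆ q ∈ D ∩ Ioi s, v q := by
  have hs : s ∈ closure (D ∩ Ioi s) := by
    have := closure_mono (hD.open_subset_closure_inter (isOpen_Ioi (a := s)))
    rw [closure_Ioi, closure_closure, inter_comm] at this
    exact this self_mem_Ici
  refine closure_minimal ?_ isClosed_Iic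
    ((hv.mono (inter_subset_right.trans Ioi_subset_Ici_self)).mem_closure_image hs)
  rintro _ ⟨q, hq, rfl⟩
  exact le_iSup₂ (f := fun q _ => v q) q hq

theorem limsup_atTop_eq_iInf_biSup_of_dense (hD : Dense D)
    (hv : ∀ s, ContinuousWithinAt v (Ici s) s) :
    limsup v atTop = ⨅ n : ℕ, ⨆ q ∈ D ∩ Ici (n : ℝ≥0), v q := by
  rw [atTop_basis.limsup_eq_iInf_iSup]
  simp only [iInf_true]
  refine le_antisymm (le_iInf fun n => iInf_le_of_le n (iSup₂_le fun s hs => ?_))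
    (le_iInf fun t => ?_)
  · refine (le_biSup_of_continuousWithinAt_Ici hD (hv s)).trans (biSup_mono ?_)
    exact fun q hq => ⟨hq.1, (mem_Ici.1 hs).trans hq.2.le⟩
  · obtain ⟨n, hn⟩ := exists_nat_ge t
    exact iInf_le_of_le n (biSup_mono fun q hq => hn.trans hq.2)

end RightContinuous

theorem Continuous.measurableEmbedding_of_sigmaCompactSpace {α γ : Type*} [TopologicalSpace α]
    [SigmaCompactSpace α] [MeasurableSpace α] [BorelSpace α] [TopologicalSpace γ] [T2Space γ]
    [MeasurableSpace γ] [BorelSpace γ] {f : α → γ} (hf : Continuous f)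
    (hinj : Function.Injective f) : MeasurableEmbedding f := by
  refine ⟨hinj, hf.measurable, fun s hs => ?_⟩
  rw [← inter_univ s, ← iUnion_compactCovering, inter_iUnion, image_iUnion]
  refine MeasurableSet.iUnion fun n => ?_
  let K := compactCovering α n
  have : CompactSpace K := isCompact_iff_compactSpace.1 (isCompact_compactCovering α n)
  have hK : IsClosedEmbedding (f ∘ ((↑) : K → α)) :=
    (hf.comp continuous_subtype_val).isClosedEmbedding (hinj.comp Subtype.val_injective)
  rw [inter_comm, ← Subtype.image_preimage_coe, ← image_comp]
  exact hK.measurableEmbedding.measurableSet_image' (measurable_subtype_coe hs)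

theorem DenseRange.injective_edist {X ι : Type*} [EMetricSpace X] {u : ι → X}
    (hu : DenseRange u) : Function.Injective fun x i => edist x (u i) := by
  intro a b hab
  have hb : edist a b = edist b b :=
    hu.induction_on (p := fun x => edist a x = edist b x) b
      (isClosed_eq (continuous_const.edist continuous_id) (continuous_const.edist continuous_id))
      fun i => congrFun hab i
  simpa using hb

theorem Cadlag.measurable_eval {E : Type*} [TopologicalSpace E] [MeasurableSpace E]
    (t : ℝ≥0) : Measurable fun ω : Cadlag E => ω.toFun t :=
  measurable_iff_comap_le.2
    (le_iSup (fun t => MeasurableSpace.comap (fun ω : Cadlag E => ω.toFun t) _) t)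

section LimsupEdist

variable {E : Type*} [PseudoEMetricSpace E] (u : ℕ → E)

def limsupEdist (ω : ℝ≥0 → E) (k : ℕ) : ℝ≥0∞ :=
  limsup (fun t => edist (ω t) (u k)) atTop

theorem limsupEdist_of_tendsto {ω : ℝ≥0 → E} {l : E} (h : Tendsto ω atTop (𝓝 l)) :
    limsupEdist u ω = fun k => edist l (u k) :=
  funext fun _ => ((continuous_id.edist continuous_const).tendsto l |>.comp h).limsup_eq

theorem limsupEdist_const_add (ω : ℝ≥0 → E) (t : ℝ≥0) :
    limsupEdist u (fun s => ω (t + s)) = limsupEdist u ω :=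
  funext fun k => limsup_comp_const_add (fun s => edist (ω s) (u k)) t

theorem measurable_limsupEdist [MeasurableSpace E] [OpensMeasurableSpace E] :
    Measurable fun ω : Cadlag E => limsupEdist u ω.toFun := by
  obtain ⟨D, hDc, hD⟩ := TopologicalSpace.exists_countable_dense ℝ≥0
  refine measurable_pi_lambda _ fun k => ?_
  have hrc (ω : Cadlag E) (s : ℝ≥0) :
      ContinuousWithinAt (fun t => edist (ω.toFun t) (u k)) (Ici s) s :=
    (continuous_id.edist continuous_const).continuousAt.comp_continuousWithinAt (ω.isCadlag.1 s)
  simp only [limsupEdist, limsup_atTop_eq_iInf_biSup_of_dense hD (hrc _)]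
  exact .iInf fun n => .biSup _ (hDc.mono inter_subset_left) fun q _ =>
    (continuous_id.edist continuous_const).measurable.comp (Cadlag.measurable_eval q)

end LimsupEdist

theorem statement14_general {E : Type*} [TopologicalSpace E]
    [LocallyCompactSpace E] [SecondCountableTopology E]
    [TopologicalSpace.MetrizableSpace E] [Nonempty E]
    [MeasurableSpace E] [BorelSpace E] :
    ∃ L : Cadlag E → E, Measurable L ∧
      (∀ (ω : Cadlag E) (l : E), Filter.Tendsto ω.toFun Filter.atTop (nhds l) → L ω = l) ∧
      (∀ (ω : Cadlag E) (t : ℝ≥0), L (Cadlag.shift t ω) = L ω) := by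
  let := TopologicalSpace.metrizableSpaceMetric E
  obtain ⟨u, hu⟩ := TopologicalSpace.exists_dense_seq E
  have hemb : MeasurableEmbedding fun x k => edist x (u k) :=
    Continuous.measurableEmbedding_of_sigmaCompactSpace
      (continuous_pi fun k => continuous_id.edist continuous_const) hu.injective_edist
  obtain ⟨r, hr, hre⟩ := hemb.exists_measurable_extend measurable_id fun _ => inferInstance
  refine ⟨fun ω => r (limsupEdist u ω.toFun), hr.comp (measurable_limsupEdist u), ?_, ?_⟩
  · exact fun ω l hl => (congrArg r (limsupEdist_of_tendsto u hl)).trans (congrFun hre l)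
  · exact fun ω t => congrArg r (limsupEdist_const_add u ω.toFun t)

/-- **A measurable shift-invariant "limit" functional.** Let `E` be a metrizable,
noncompact, locally compact Hausdorff topological space with a countable base, and `D_E`
the space of `E`-valued RCLL paths with the σ-algebra generated by the coordinate maps.
There is a measurable functional `L : D_E → E` such that (1) `L(ω) = lim_{t→∞} X_t(ω)`
whenever this limit exists in `E`, and (2) `L(θ_t(ω)) = L(ω)` for all `ω ∈ D_E`, `t ≥ 0`. -/
theorem statement14 {E : Type*} [TopologicalSpace E] [T2Space E]
    [LocallyCompactSpace E] [SecondCountableTopology E]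
    [TopologicalSpace.MetrizableSpace E] [NoncompactSpace E] [Nonempty E]
    [MeasurableSpace E] [BorelSpace E] :
    ∃ L : Cadlag E → E, Measurable L ∧
      (∀ (ω : Cadlag E) (l : E), Filter.Tendsto ω.toFun Filter.atTop (nhds l) → L ω = l) ∧
      (∀ (ω : Cadlag E) (t : ℝ≥0), L (Cadlag.shift t ω) = L ω) :=
  statement14_general
end
end
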